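/- arXiv:2301.01846 — 3 statements merged into one kernel-verified Lean document; each statement's English description precedes it below -/
import Mathlib

section
/- Let ξ be a C² modulus on (0,∞) with ξ′>0 and A(t)=t²ξ²(t) satisfying A″>0. Define r(s) = √(ξ²(s)+2sξ(s)ξ′(s)) and, for t>0, the curve Γ^t(τ) = ((τ/t)r(τ), (τ/t)(r²(τ)+ξ²(τ))) for τ ≥ 0. Then the function τ ↦ Γ₂^t(τ) − (Γ₁^t(τ))² is strictly increasing on [0,t] and strictly decreasing on [t,∞), with maximum value ξ²(t) attained at τ = t. Its derivative equals (1/t²)A″(τ)(t−τ). -/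
/-!
For `τ > 0` one has `t² g(τ) = A(τ) + A'(τ)(t - τ)`, the value at `t` of the tangent line to
`A(s) = s² ξ(s)²` at `τ`. Its derivative in `τ` is `A''(τ)(t - τ)`, so by strict convexity of `A`
the tangent value increases up to `τ = t` and decreases afterwards, its maximum being
`A(t) = t² ξ(t)²`. At `τ = 0` monotonicity comes from `g 0 = 0 < g τ`, both terms of the tangent
value being positive on `(0, t]`.
-/

open Set

lemma hasDerivAt_sq_mul_sq {ξ : ℝ → ℝ} {ξ' s : ℝ} (hξ : HasDerivAt ξ ξ' s) :
    HasDerivAt (fun x => x ^ 2 * ξ x ^ 2) (2 * s * ξ s ^ 2 + 2 * s ^ 2 * ξ s * ξ') s := by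
  have h : HasDerivAt (fun x => x ^ 2 * ξ x ^ 2) _ s := (hasDerivAt_pow 2 s).mul (hξ.pow 2)
  convert h using 1
  ring

lemma hasDerivAt_add_deriv_mul_sub {f : ℝ → ℝ} {f'' s : ℝ} (t : ℝ)
    (hf : DifferentiableAt ℝ f s) (hf' : HasDerivAt (deriv f) f'' s) :
    HasDerivAt (fun x => f x + deriv f x * (t - x)) (f'' * (t - s)) s := by
  have h : HasDerivAt (fun x => f x + deriv f x * (t - x)) _ s :=
    hf.hasDerivAt.add (hf'.mul ((hasDerivAt_id s).const_sub t))
  convert h using 1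
  ring

lemma strictMonoOn_Icc_of_hasDerivAt_pos {f f' : ℝ → ℝ} {a b : ℝ} (hab : a ≤ b)
    (hf : ∀ x ∈ Ioc a b, HasDerivAt f (f' x) x) (hf' : ∀ x ∈ Ioo a b, 0 < f' x)
    (ha : ∀ x ∈ Ioc a b, f a < f x) : StrictMonoOn f (Icc a b) := by
  rw [← Ioc_insert_left hab, strictMonoOn_insert_iff_of_forall_ge fun x hx => hx.1.le]
  refine ⟨fun x hx _ => ha x hx, strictMonoOn_of_hasDerivWithinAt_pos (f' := f') (convex_Ioc a b)
    (fun x hx => (hf x hx).continuousAt.continuousWithinAt) ?_ ?_⟩ <;> rw [interior_Ioc]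
  · exact fun x hx => (hf x (Ioo_subset_Ioc_self hx)).hasDerivWithinAt
  · exact hf'

lemma strictAntiOn_Ici_of_hasDerivAt_neg {f f' : ℝ → ℝ} {a : ℝ}
    (hf : ∀ x ∈ Ici a, HasDerivAt f (f' x) x) (hf' : ∀ x ∈ Ioi a, f' x < 0) :
    StrictAntiOn f (Ici a) := by
  refine strictAntiOn_of_hasDerivWithinAt_neg (f' := f') (convex_Ici a)
    (fun x hx => (hf x hx).continuousAt.continuousWithinAt) ?_ ?_ <;> rw [interior_Ici]
  · exact fun x hx => (hf x (Ioi_subset_Ici_self hx)).hasDerivWithinAt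
  · exact hf'

lemma curve_gap_eq_tangent_value {ξ : ℝ → ℝ} {ξ' τ t : ℝ} (ht : t ≠ 0)
    (hξ : HasDerivAt ξ ξ' τ) (hrad : 0 ≤ ξ τ ^ 2 + 2 * τ * ξ τ * ξ') :
    τ / t * (√(ξ τ ^ 2 + 2 * τ * ξ τ * ξ') ^ 2 + ξ τ ^ 2)
        - (τ / t * √(ξ τ ^ 2 + 2 * τ * ξ τ * ξ')) ^ 2
      = (τ ^ 2 * ξ τ ^ 2 + deriv (fun x => x ^ 2 * ξ x ^ 2) τ * (t - τ)) / t ^ 2 := by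
  rw [mul_pow, Real.sq_sqrt hrad, (hasDerivAt_sq_mul_sq hξ).deriv]
  field_simp
  ring

theorem statement6_general (ξ ξ' A'' : ℝ → ℝ)
    (hpos : ∀ t > 0, 0 < ξ t)
    (hderiv : ∀ t > 0, HasDerivAt ξ (ξ' t) t)
    (hξ'pos : ∀ t > 0, 0 < ξ' t)
    (hA'' : ∀ t > 0, HasDerivAt (deriv (fun t => t ^ 2 * ξ t ^ 2)) (A'' t) t)
    (hA''pos : ∀ t > 0, 0 < A'' t)
    (t : ℝ) (ht : 0 < t)
    (r : ℝ → ℝ) (hr : ∀ s, r s = Real.sqrt (ξ s ^ 2 + 2 * s * ξ s * ξ' s))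
    (g : ℝ → ℝ) (hg : ∀ τ, g τ = (τ / t) * (r τ ^ 2 + ξ τ ^ 2) - ((τ / t) * r τ) ^ 2) :
    StrictMonoOn g (Set.Icc 0 t) ∧
    StrictAntiOn g (Set.Ici t) ∧
    g t = ξ t ^ 2 ∧
    (∀ τ ∈ Set.Icc 0 t ∪ Set.Ici t, g τ ≤ ξ t ^ 2) ∧
    (∀ τ > 0, HasDerivAt g ((1 / t ^ 2) * A'' τ * (t - τ)) τ) := by
  set A : ℝ → ℝ := fun s => s ^ 2 * ξ s ^ 2
  have hA' : ∀ τ > 0, HasDerivAt A (2 * τ * ξ τ ^ 2 + 2 * τ ^ 2 * ξ τ * ξ' τ) τ :=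
    fun τ hτ => hasDerivAt_sq_mul_sq (hderiv τ hτ)
  have hgA : ∀ τ > 0, g τ = (A τ + deriv A τ * (t - τ)) / t ^ 2 := fun τ hτ => by
    have := hpos τ hτ
    have := hξ'pos τ hτ
    rw [hg, hr]
    exact curve_gap_eq_tangent_value ht.ne' (hderiv τ hτ) (by positivity)
  have hg' : ∀ τ > 0, HasDerivAt g (1 / t ^ 2 * A'' τ * (t - τ)) τ := fun τ hτ => by
    refine ((hasDerivAt_add_deriv_mul_sub t (hA' τ hτ).differentiableAt (hA'' τ hτ)).div_const
      (t ^ 2) |>.congr_of_eventuallyEq ?_).congr_deriv (by ring)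
    filter_upwards [Ioi_mem_nhds hτ] with x hx using hgA x hx
  have hgt : g t = ξ t ^ 2 := by rw [hg, div_self ht.ne']; ring
  have hg0 : ∀ τ ∈ Ioc 0 t, g 0 < g τ := fun τ ⟨hτ, hτt⟩ => by
    have := hpos τ hτ
    have := hξ'pos τ hτ
    have hAτ : 0 < A τ := by positivity
    have hA'τ : 0 < deriv A τ := by rw [(hA' τ hτ).deriv]; positivity
    rw [hg, hgA τ hτ]
    simpa using div_pos (add_pos_of_pos_of_nonneg hAτ
      (mul_nonneg hA'τ.le (sub_nonneg.2 hτt))) (by positivity : (0 : ℝ) < t ^ 2)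
  have hmono : StrictMonoOn g (Icc 0 t) :=
    strictMonoOn_Icc_of_hasDerivAt_pos ht.le (fun τ hτ => hg' τ hτ.1)
      (fun τ hτ => mul_pos (by have := hA''pos τ hτ.1; positivity) (sub_pos.2 hτ.2)) hg0
  have hanti : StrictAntiOn g (Ici t) :=
    strictAntiOn_Ici_of_hasDerivAt_neg (fun τ hτ => hg' τ (ht.trans_le hτ))
      (fun τ hτ => mul_neg_of_pos_of_neg
        (by have := hA''pos τ (ht.trans hτ); positivity) (sub_neg.2 hτ))
  refine ⟨hmono, hanti, hgt, ?_, hg'⟩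
  rintro τ (hτ | hτ) <;> rw [← hgt]
  · exact hmono.monotoneOn hτ (right_mem_Icc.2 ht.le) hτ.2
  · exact hanti.antitoneOn self_mem_Ici hτ hτ

/-- Under the smooth setup, for fixed `t > 0` and the curve
`Γ^t(τ) = ((τ/t)r(τ), (τ/t)(r²(τ)+ξ²(τ)))`, the function `g(τ) = Γ₂^t(τ) − (Γ₁^t(τ))²`
is strictly increasing on `[0,t]`, strictly decreasing on `[t,∞)`, attains its maximum
`ξ²(t)` at `τ = t`, and has derivative `g′(τ) = (1/t²)A″(τ)(t−τ)` for `τ > 0`. -/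
theorem statement6 (ξ ξ' A'' : ℝ → ℝ)
    (hsmooth : ContDiffOn ℝ 2 ξ (Set.Ioi 0))
    (hpos : ∀ t > 0, 0 < ξ t)
    (hξ0 : Filter.Tendsto ξ (nhdsWithin 0 (Set.Ioi 0)) (nhds 0))
    (hderiv : ∀ t > 0, HasDerivAt ξ (ξ' t) t)
    (hξ'pos : ∀ t > 0, 0 < ξ' t)
    (hA'' : ∀ t > 0, HasDerivAt (deriv (fun t => t ^ 2 * ξ t ^ 2)) (A'' t) t)
    (hA''pos : ∀ t > 0, 0 < A'' t)
    (t : ℝ) (ht : 0 < t)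
    (r : ℝ → ℝ) (hr : ∀ s, r s = Real.sqrt (ξ s ^ 2 + 2 * s * ξ s * ξ' s))
    (g : ℝ → ℝ) (hg : ∀ τ, g τ = (τ / t) * (r τ ^ 2 + ξ τ ^ 2) - ((τ / t) * r τ) ^ 2) :
    StrictMonoOn g (Set.Icc 0 t) ∧
    StrictAntiOn g (Set.Ici t) ∧
    g t = ξ t ^ 2 ∧
    (∀ τ ∈ Set.Icc 0 t ∪ Set.Ici t, g τ ≤ ξ t ^ 2) ∧
    (∀ τ > 0, HasDerivAt g ((1 / t ^ 2) * A'' τ * (t - τ)) τ) :=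
  statement6_general ξ ξ' A'' hpos hderiv hξ'pos hA'' hA''pos t ht r hr g hg
end

section
/- Let ξ be a modulus on [0,T] (continuous, increasing, ξ(0)=0) and let t₀ ∈ (0,T]. Then for every δ > 0 there exists a continuous increasing function ξ̃ on [0,T] such that ξ̃ ≥ ξ on [0,T], ξ̃(0) = 0, ξ̃(t₀) ≤ ξ(t₀) + δ, and the function t ↦ t·ξ̃(t) is convex on [0,T]. -/
/-!
It suffices to find a convex `h ≥ t ξ(t)` on `[0,T]` with `h(0) = 0`, `h(t)/t → 0` as `t → 0⁺`
and `h(t₀) ≤ t₀ (ξ(t₀) + δ)`, and to put `ξ̃(t) = h(t)/t`: convexity and `h(0) = 0` make `h(t)/t`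
increasing, and `t ξ̃(t) = h(t)`. For `h` take the supremum of the lines through `(s, s ξ(s))` of
slope `(1 + ε) ξ(s)`, `s ∈ [0,t₀]`, together with a steep line through `(t₀, t₀ (ξ(t₀) + δ))`
that dominates `t ξ(t)` on `[t₀,T]` and is negative near `0`. The line through `s` is positive at
`t` only if `s < (1 + ε) t / ε`, so the supremum is at most `(1 + ε) t ξ(min((1 + ε) t / ε, t₀))`;
this gives both `h(t)/t → 0` and `h(t₀) ≤ (1 + ε) t₀ ξ(t₀)`.
-/

open Set Filter Topology

theorem convexOn_affine (a b : ℝ) : ConvexOn ℝ univ fun t => a * t + b :=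
  ⟨convex_univ, fun x _ y _ α β _ _ hαβ => le_of_eq <| by
    simp only [smul_eq_mul]; linear_combination -b * hαβ⟩

theorem convexOn_ciSup {ι : Type*} [Nonempty ι] {s : Set ℝ} {f : ι → ℝ → ℝ}
    (hf : ∀ i, ConvexOn ℝ s (f i)) (hbdd : ∀ x, BddAbove (range fun i => f i x)) (hs : Convex ℝ s) :
    ConvexOn ℝ s fun x => ⨆ i, f i x :=
  ⟨hs, fun x hx y hy _ _ ha hb hab => ciSup_le fun i => ((hf i).2 hx hy ha hb hab).trans <|
    add_le_add (smul_le_smul_of_nonneg_left (le_ciSup (hbdd x) i) ha)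
      (smul_le_smul_of_nonneg_left (le_ciSup (hbdd y) i) hb)⟩

theorem ConvexOn.monotoneOn_div_of_map_zero {s : Set ℝ} {h : ℝ → ℝ} (hh : ConvexOn ℝ s h)
    (hs : 0 ∈ s) (h0 : h 0 = 0) (hnn : ∀ t ∈ s, 0 ≤ h t) :
    MonotoneOn (fun t => h t / t) s := by
  intro x hx y hy hxy
  rcases eq_or_ne x 0 with rfl | hx0
  · simpa using div_nonneg (hnn y hy) hxy
  rcases eq_or_ne y 0 with rfl | hy0
  · simpa using div_nonpos_of_nonneg_of_nonpos (hnn x hx) hxy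
  simpa [h0] using hh.secant_mono hs hx hy hx0 hy0 hxy

theorem Continuous.continuousOn_div_Ici {h : ℝ → ℝ} (hc : Continuous h)
    (h0 : Tendsto (fun t => h t / t) (𝓝[≥] 0) (𝓝 0)) :
    ContinuousOn (fun t => h t / t) (Ici 0) := by
  intro x (hx : 0 ≤ x)
  rcases hx.eq_or_lt with rfl | hx
  · simpa [ContinuousWithinAt] using h0
  · exact (hc.continuousAt.div continuousAt_id hx.ne').continuousWithinAt

theorem ContinuousOn.exists_affine_majorant_Icc {g : ℝ → ℝ} {a b A : ℝ}
    (hg : ContinuousOn g (Icc a b)) (hab : a ≤ b) (hga : g a < A) (C₀ : ℝ) :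
    ∃ C ≥ C₀, ∀ t ∈ Icc a b, g t ≤ A + C * (t - a) := by
  obtain ⟨M, hM⟩ := isCompact_Icc.bddAbove_image hg
  obtain ⟨η, hη, hnear⟩ : ∃ η > 0, ∀ t ∈ Icc a b, t < a + η → g t < A := by
    have := (hg a ⟨le_rfl, hab⟩).eventually (gt_mem_nhds hga)
    obtain ⟨η, hη, hball⟩ := Metric.mem_nhdsWithin_iff.mp this
    refine ⟨η, hη, fun t ht hta => hball ⟨?_, ht⟩⟩
    rw [Metric.mem_ball, Real.dist_eq, abs_lt]
    constructor <;> linarith [ht.1]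
  refine ⟨max C₀ (max 0 ((M - A) / η)), le_max_left _ _, fun t ht => ?_⟩
  have hC0 : 0 ≤ max C₀ (max 0 ((M - A) / η)) := (le_max_left _ _).trans (le_max_right _ _)
  rcases lt_or_ge t (a + η) with hta | hta
  · linarith [hnear t ht hta, mul_nonneg hC0 (sub_nonneg.mpr ht.1)]
  · have hslope : M - A ≤ max C₀ (max 0 ((M - A) / η)) * η :=
      (div_le_iff₀ hη).mp ((le_max_right _ _).trans (le_max_right _ _))
    have := mul_le_mul_of_nonneg_left (show η ≤ t - a by linarith) hC0
    linarith [hM (mem_image_of_mem g ht)]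

theorem MonotoneOn.nonneg_of_map_zero {ξ : ℝ → ℝ} {t₀ s : ℝ} (hmono : MonotoneOn ξ (Icc 0 t₀))
    (hξ0 : ξ 0 = 0) (hs : s ∈ Icc 0 t₀) : 0 ≤ ξ s :=
  hξ0 ▸ hmono ⟨le_rfl, hs.1.trans hs.2⟩ hs hs.1

section lineSup

variable {ξ : ℝ → ℝ} {t₀ ε : ℝ}

noncomputable def lineSup (ξ : ℝ → ℝ) (t₀ ε t : ℝ) : ℝ :=
  ⨆ s : Icc (0 : ℝ) t₀, ξ s * ((1 + ε) * t - ε * s)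

theorem bddAbove_range_lineSup (hmono : MonotoneOn ξ (Icc 0 t₀)) (hξ0 : ξ 0 = 0) (hε : 0 ≤ ε)
    (t : ℝ) : BddAbove (range fun s : Icc (0 : ℝ) t₀ => ξ s * ((1 + ε) * t - ε * s)) := by
  refine ⟨ξ t₀ * ((1 + ε) * |t|), ?_⟩
  rintro _ ⟨⟨s, hs⟩, rfl⟩
  have hfactor : (1 + ε) * t - ε * s ≤ (1 + ε) * |t| := by
    nlinarith [le_abs_self t, mul_nonneg hε hs.1]
  calc ξ s * ((1 + ε) * t - ε * s) ≤ ξ s * ((1 + ε) * |t|) :=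
        mul_le_mul_of_nonneg_left hfactor (hmono.nonneg_of_map_zero hξ0 hs)
    _ ≤ ξ t₀ * ((1 + ε) * |t|) :=
        mul_le_mul_of_nonneg_right (hmono hs ⟨hs.1.trans hs.2, le_rfl⟩ hs.2) (by positivity)

theorem lineSup_nonneg (hmono : MonotoneOn ξ (Icc 0 t₀)) (hξ0 : ξ 0 = 0) (hε : 0 ≤ ε)
    (ht₀ : 0 ≤ t₀) (t : ℝ) : 0 ≤ lineSup ξ t₀ ε t := by
  simpa [lineSup, hξ0] using le_ciSup (bddAbove_range_lineSup hmono hξ0 hε t) ⟨0, le_rfl, ht₀⟩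

theorem mul_le_lineSup (hmono : MonotoneOn ξ (Icc 0 t₀)) (hξ0 : ξ 0 = 0) (hε : 0 ≤ ε)
    {t : ℝ} (ht : t ∈ Icc 0 t₀) : t * ξ t ≤ lineSup ξ t₀ ε t :=
  calc t * ξ t = ξ t * ((1 + ε) * t - ε * t) := by ring
    _ ≤ lineSup ξ t₀ ε t := le_ciSup (bddAbove_range_lineSup hmono hξ0 hε t) ⟨t, ht⟩

theorem lineSup_le_mul (hmono : MonotoneOn ξ (Icc 0 t₀)) (hξ0 : ξ 0 = 0) (hε : 0 < ε)
    {t r : ℝ} (ht : 0 ≤ t) (hr : r ∈ Icc 0 t₀) (htr : min ((1 + ε) * t / ε) t₀ ≤ r) :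
    lineSup ξ t₀ ε t ≤ (1 + ε) * t * ξ r := by
  have hξr := hmono.nonneg_of_map_zero hξ0 hr
  have : Nonempty (Icc (0 : ℝ) t₀) := ⟨⟨r, hr⟩⟩
  refine ciSup_le fun ⟨s, hs⟩ => ?_
  have hξs := hmono.nonneg_of_map_zero hξ0 hs
  rcases le_or_gt ((1 + ε) * t) (ε * s) with hst | hst
  · nlinarith [mul_nonneg (mul_nonneg (by linarith : (0 : ℝ) ≤ 1 + ε) ht) hξr]
  · have hsr : s ≤ r := (le_min ((le_div_iff₀ hε).mpr (by linarith)) hs.2).trans htr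
    have hξsr : ξ s ≤ ξ r := hmono hs hr hsr
    calc ξ s * ((1 + ε) * t - ε * s) ≤ ξ r * ((1 + ε) * t) :=
          mul_le_mul hξsr (by nlinarith [mul_nonneg hε.le hs.1]) (by linarith) hξr
      _ = (1 + ε) * t * ξ r := by ring

theorem convexOn_lineSup (hmono : MonotoneOn ξ (Icc 0 t₀)) (hξ0 : ξ 0 = 0) (hε : 0 ≤ ε)
    (ht₀ : 0 ≤ t₀) : ConvexOn ℝ univ (lineSup ξ t₀ ε) :=
  haveI : Nonempty (Icc (0 : ℝ) t₀) := ⟨⟨0, le_rfl, ht₀⟩⟩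
  convexOn_ciSup (fun s => (convexOn_affine (ξ s * (1 + ε)) (-(ξ s * ε * s))).congr
    fun t _ => by ring) (bddAbove_range_lineSup hmono hξ0 hε) convex_univ

theorem tendsto_lineSup_div (hmono : MonotoneOn ξ (Icc 0 t₀)) (hξ0 : ξ 0 = 0)
    (hcont : ContinuousWithinAt ξ (Icc 0 t₀) 0) (hε : 0 < ε) (ht₀ : 0 ≤ t₀) :
    Tendsto (fun t => lineSup ξ t₀ ε t / t) (𝓝[≥] 0) (𝓝 0) := by
  set m : ℝ → ℝ := fun t => min ((1 + ε) * t / ε) t₀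
  have hm : ∀ t, 0 ≤ t → m t ∈ Icc 0 t₀ := fun t ht =>
    ⟨le_min (div_nonneg (mul_nonneg (by linarith) ht) hε.le) ht₀, min_le_right _ _⟩
  have hm0 : Tendsto m (𝓝[≥] 0) (𝓝[Icc 0 t₀] 0) := by
    refine tendsto_nhdsWithin_of_tendsto_nhds_of_eventually_within _ ?_ ?_
    · have hmc : Continuous m := by fun_prop
      simpa [m, min_eq_left ht₀] using (hmc.tendsto 0).mono_left nhdsWithin_le_nhds
    · filter_upwards [self_mem_nhdsWithin] with t ht using hm t ht
  have hbound : Tendsto (fun t => (1 + ε) * ξ (m t)) (𝓝[≥] 0) (𝓝 0) := by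
    simpa [hξ0] using (hcont.tendsto.comp hm0).const_mul (1 + ε)
  refine tendsto_of_tendsto_of_tendsto_of_le_of_le' tendsto_const_nhds hbound ?_ ?_
  · filter_upwards [self_mem_nhdsWithin] with t (ht : 0 ≤ t)
    exact div_nonneg (lineSup_nonneg hmono hξ0 hε.le ht₀ t) ht
  · filter_upwards [self_mem_nhdsWithin] with t (ht : 0 ≤ t)
    refine div_le_of_le_mul₀ ht (mul_nonneg (by linarith) (hmono.nonneg_of_map_zero hξ0 (hm t ht))) ?_
    linarith [lineSup_le_mul hmono hξ0 hε ht (hm t ht) le_rfl]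

end lineSup

section majorant

variable {ξ : ℝ → ℝ} {t₀ ε A C : ℝ}

noncomputable def nazarovMajorant (ξ : ℝ → ℝ) (t₀ ε A C t : ℝ) : ℝ :=
  max (lineSup ξ t₀ ε t) (A + C * (t - t₀))

theorem convexOn_nazarovMajorant (hmono : MonotoneOn ξ (Icc 0 t₀)) (hξ0 : ξ 0 = 0)
    (hε : 0 ≤ ε) (ht₀ : 0 ≤ t₀) : ConvexOn ℝ univ (nazarovMajorant ξ t₀ ε A C) :=
  (convexOn_lineSup hmono hξ0 hε ht₀).sup ((convexOn_affine C (A - C * t₀)).congr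
    fun t _ => by ring)

theorem nazarovMajorant_nonneg (hmono : MonotoneOn ξ (Icc 0 t₀)) (hξ0 : ξ 0 = 0)
    (hε : 0 ≤ ε) (ht₀ : 0 ≤ t₀) (t : ℝ) : 0 ≤ nazarovMajorant ξ t₀ ε A C t :=
  (lineSup_nonneg hmono hξ0 hε ht₀ t).trans (le_max_left _ _)

theorem nazarovMajorant_eventuallyEq_lineSup (hmono : MonotoneOn ξ (Icc 0 t₀)) (hξ0 : ξ 0 = 0)
    (hε : 0 ≤ ε) (ht₀ : 0 ≤ t₀) (hAC : A < C * t₀) :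
    nazarovMajorant ξ t₀ ε A C =ᶠ[𝓝 0] lineSup ξ t₀ ε := by
  have hline : ∀ᶠ t in 𝓝 0, A + C * (t - t₀) < 0 :=
    (by fun_prop : Continuous fun t => A + C * (t - t₀)).continuousAt.eventually_lt
      continuousAt_const (by linarith)
  filter_upwards [hline] with t ht
  exact max_eq_left (ht.le.trans (lineSup_nonneg hmono hξ0 hε ht₀ t))

theorem nazarovMajorant_zero (hmono : MonotoneOn ξ (Icc 0 t₀)) (hξ0 : ξ 0 = 0)
    (hε : 0 < ε) (ht₀ : 0 ≤ t₀) (hAC : A < C * t₀) : nazarovMajorant ξ t₀ ε A C 0 = 0 := by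
  rw [(nazarovMajorant_eventuallyEq_lineSup hmono hξ0 hε.le ht₀ hAC).eq_of_nhds]
  refine le_antisymm ?_ (lineSup_nonneg hmono hξ0 hε.le ht₀ 0)
  simpa using lineSup_le_mul hmono hξ0 hε le_rfl ⟨le_rfl, ht₀⟩ (by simp [ht₀])

theorem tendsto_nazarovMajorant_div (hmono : MonotoneOn ξ (Icc 0 t₀)) (hξ0 : ξ 0 = 0)
    (hcont : ContinuousWithinAt ξ (Icc 0 t₀) 0) (hε : 0 < ε) (ht₀ : 0 ≤ t₀) (hAC : A < C * t₀) :
    Tendsto (fun t => nazarovMajorant ξ t₀ ε A C t / t) (𝓝[≥] 0) (𝓝 0) :=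
  (tendsto_lineSup_div hmono hξ0 hcont hε ht₀).congr' <| nhdsWithin_le_nhds <|
    (nazarovMajorant_eventuallyEq_lineSup hmono hξ0 hε.le ht₀ hAC).mono fun t ht => by
      simp only [ht]

theorem mul_le_nazarovMajorant {T : ℝ} (hmono : MonotoneOn ξ (Icc 0 t₀)) (hξ0 : ξ 0 = 0)
    (hε : 0 ≤ ε) (hline : ∀ t ∈ Icc t₀ T, t * ξ t ≤ A + C * (t - t₀)) {t : ℝ} (ht : t ∈ Icc 0 T) :
    t * ξ t ≤ nazarovMajorant ξ t₀ ε A C t := by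
  rcases le_total t t₀ with htt₀ | htt₀
  · exact (mul_le_lineSup hmono hξ0 hε ⟨ht.1, htt₀⟩).trans (le_max_left _ _)
  · exact (hline t ⟨htt₀, ht.2⟩).trans (le_max_right _ _)

theorem nazarovMajorant_le (hmono : MonotoneOn ξ (Icc 0 t₀)) (hξ0 : ξ 0 = 0) (hε : 0 < ε)
    (ht₀ : 0 ≤ t₀) : nazarovMajorant ξ t₀ ε A C t₀ ≤ max ((1 + ε) * t₀ * ξ t₀) A := by
  refine max_le_max ?_ (by simp)
  exact lineSup_le_mul hmono hξ0 hε ht₀ ⟨ht₀, le_rfl⟩ (min_le_right _ _)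

end majorant

theorem exists_modulus_of_convex_majorant {T t₀ c : ℝ} {ξ h : ℝ → ℝ} (hconv : ConvexOn ℝ univ h)
    (h0 : h 0 = 0) (hnn : ∀ t, 0 ≤ h t) (hlim : Tendsto (fun t => h t / t) (𝓝[≥] 0) (𝓝 0))
    (hξ0 : ξ 0 ≤ 0) (hle : ∀ t ∈ Icc 0 T, t * ξ t ≤ h t) (ht₀ : 0 < t₀) (hht₀ : h t₀ ≤ t₀ * c) :
    ∃ ξt : ℝ → ℝ, ContinuousOn ξt (Icc 0 T) ∧ MonotoneOn ξt (Icc 0 T) ∧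
      (∀ t ∈ Icc 0 T, ξ t ≤ ξt t) ∧ ξt 0 = 0 ∧ ξt t₀ ≤ c ∧
      ConvexOn ℝ (Icc 0 T) fun t => t * ξt t := by
  refine ⟨fun t => h t / t, ?_, ?_, fun t ht => ?_, div_zero _, ?_, ?_⟩
  · exact ((continuousOn_univ.mp (hconv.continuousOn isOpen_univ)).continuousOn_div_Ici
      hlim).mono Icc_subset_Ici_self
  · exact (hconv.monotoneOn_div_of_map_zero (mem_univ 0) h0 fun t _ => hnn t).mono
      (subset_univ _)
  · rcases ht.1.eq_or_lt with rfl | htpos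
    · simpa using hξ0
    · exact (le_div_iff₀ htpos).mpr (by linarith [hle t ht])
  · exact (div_le_iff₀ ht₀).mpr (by linarith)
  · refine (hconv.subset (subset_univ _) (convex_Icc 0 T)).congr fun t _ => ?_
    rcases eq_or_ne t 0 with rfl | ht
    · simp [h0]
    · field_simp

theorem statement13_general (T : ℝ) (ξ : ℝ → ℝ)
    (hcont : ContinuousOn ξ (Set.Icc 0 T))
    (hmono : MonotoneOn ξ (Set.Icc 0 T))
    (hξ0 : ξ 0 = 0)
    (t₀ : ℝ) (ht₀ : t₀ ∈ Set.Ioc 0 T)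
    (δ : ℝ) (hδ : 0 < δ) :
    ∃ ξt : ℝ → ℝ,
      ContinuousOn ξt (Set.Icc 0 T) ∧
      MonotoneOn ξt (Set.Icc 0 T) ∧
      (∀ t ∈ Set.Icc (0 : ℝ) T, ξ t ≤ ξt t) ∧
      ξt 0 = 0 ∧
      ξt t₀ ≤ ξ t₀ + δ ∧
      ConvexOn ℝ (Set.Icc 0 T) (fun t => t * ξt t) := by
  obtain ⟨ht₀, ht₀T⟩ := ht₀
  have hmono₀ : MonotoneOn ξ (Icc 0 t₀) := hmono.mono (Icc_subset_Icc_right ht₀T)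
  have hcont₀ : ContinuousWithinAt ξ (Icc 0 t₀) 0 :=
    (hcont 0 ⟨le_rfl, ht₀.le.trans ht₀T⟩).mono (Icc_subset_Icc_right ht₀T)
  have hξt₀ : 0 ≤ ξ t₀ := hmono₀.nonneg_of_map_zero hξ0 ⟨ht₀.le, le_rfl⟩
  set ε := δ / (ξ t₀ + 1)
  have hε : 0 < ε := by positivity
  have hεξ : ε * ξ t₀ ≤ δ := by
    rw [div_mul_eq_mul_div, div_le_iff₀ (by positivity)]
    nlinarith
  set A := t₀ * (ξ t₀ + δ)
  obtain ⟨C, hC, hline⟩ := ((continuousOn_id.mul hcont).mono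
    (Icc_subset_Icc_left ht₀.le)).exists_affine_majorant_Icc ht₀T
    (show t₀ * ξ t₀ < A by nlinarith) (A / t₀ + 1)
  have hAC : A < C * t₀ := by
    have := mul_le_mul_of_nonneg_right hC ht₀.le
    rw [add_mul, div_mul_cancel₀ _ ht₀.ne'] at this
    linarith
  refine exists_modulus_of_convex_majorant (convexOn_nazarovMajorant hmono₀ hξ0 hε.le ht₀.le)
    (nazarovMajorant_zero hmono₀ hξ0 hε ht₀.le hAC) (nazarovMajorant_nonneg hmono₀ hξ0 hε.le ht₀.le)
    (tendsto_nazarovMajorant_div hmono₀ hξ0 hcont₀ hε ht₀.le hAC) hξ0.le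
    (fun t ht => mul_le_nazarovMajorant hmono₀ hξ0 hε.le hline ht) ht₀ ?_
  calc nazarovMajorant ξ t₀ ε A C t₀ ≤ max ((1 + ε) * t₀ * ξ t₀) A :=
        nazarovMajorant_le hmono₀ hξ0 hε ht₀.le
    _ ≤ t₀ * (ξ t₀ + δ) := max_le (by nlinarith) le_rfl

/-- (Nazarov's majorization lemma.) Let `ξ` be a modulus on `[0,T]`
(continuous, increasing, `ξ(0)=0`) and `t₀ ∈ (0,T]`. For every `δ > 0` there is a
continuous increasing function `ξ̃` on `[0,T]` with `ξ̃ ≥ ξ` on `[0,T]`, `ξ̃(0) = 0`,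
`ξ̃(t₀) ≤ ξ(t₀) + δ`, and `t ↦ t·ξ̃(t)` convex on `[0,T]`. -/
theorem statement13 (T : ℝ) (hT : 0 < T) (ξ : ℝ → ℝ)
    (hcont : ContinuousOn ξ (Set.Icc 0 T))
    (hmono : MonotoneOn ξ (Set.Icc 0 T))
    (hξ0 : ξ 0 = 0)
    (t₀ : ℝ) (ht₀ : t₀ ∈ Set.Ioc 0 T)
    (δ : ℝ) (hδ : 0 < δ) :
    ∃ ξt : ℝ → ℝ,
      ContinuousOn ξt (Set.Icc 0 T) ∧
      MonotoneOn ξt (Set.Icc 0 T) ∧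
      (∀ t ∈ Set.Icc (0 : ℝ) T, ξ t ≤ ξt t) ∧
      ξt 0 = 0 ∧
      ξt t₀ ≤ ξ t₀ + δ ∧
      ConvexOn ℝ (Set.Icc 0 T) (fun t => t * ξt t) :=
  statement13_general T ξ hcont hmono hξ0 t₀ ht₀ δ hδ
end

section
/- Let ψ be a monotone function on [a,b] with ψ ∈ L²(a,b). Then the function F(t) = t·∫_a^{a+t} ψ² − (∫_a^{a+t} ψ)² is convex on [0, b−a]. Similarly, t ↦ t·∫_{b−t}^{b} ψ² − (∫_{b−t}^{b} ψ)² is convex on [0, b−a]. -/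
/-!
Write `G t = (t - a) ∫_a^t f² - (∫_a^t f)²`. For monotone `f`, `G` is continuous, and at every
continuity point `t` of `f` (all but countably many) it has derivative
`φ t = ∫_a^t (f u - f t)² du`, so `G y - G x = ∫_x^y φ`. As `f u ≤ f s₁ ≤ f s₂` for
`u ≤ s₁ ≤ s₂`, `φ` is monotone, and a primitive of a monotone function is convex.
A monotone function on `[a, b]` extends monotonically to `ℝ`, the antitone case follows from
`f ↦ -f`, which leaves `G` unchanged, and the reflection `x ↦ -x` turns the integrals over
`[b - t, b]` into integrals over `[-b, -b + t]`.
-/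

open MeasureTheory Set intervalIntegral
open scoped Interval

theorem convexOn_of_sub_eq_integral_of_monotoneOn {s : Set ℝ} (hs : Convex ℝ s)
    {G φ : ℝ → ℝ} (hφ : MonotoneOn φ s)
    (hG : ∀ x ∈ s, ∀ y ∈ s, x ≤ y → G y - G x = ∫ u in x..y, φ u) :
    ConvexOn ℝ s G := by
  refine convexOn_of_slope_mono_adjacent hs fun {x y z} hx hz hxy hyz => ?_
  have hy : y ∈ s := hs.ordConnected.out hx hz ⟨hxy.le, hyz.le⟩
  have hsub : ∀ {p q}, p ∈ s → q ∈ s → uIcc p q ⊆ s := fun hp hq =>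
    hs.ordConnected.uIcc_subset hp hq
  have left : G y - G x ≤ (y - x) * φ y := calc
    G y - G x ≤ ∫ _ in x..y, φ y := hG x hx y hy hxy.le ▸ integral_mono_on hxy.le
      (hφ.mono (hsub hx hy)).intervalIntegrable intervalIntegrable_const
      fun u hu => hφ (hsub hx hy (Icc_subset_uIcc hu)) hy hu.2
    _ = (y - x) * φ y := by simp
  have right : (z - y) * φ y ≤ G z - G y := calc
    (z - y) * φ y = ∫ _ in y..z, φ y := by simp
    _ ≤ G z - G y := hG y hy z hz hyz.le ▸ integral_mono_on hyz.le intervalIntegrable_const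
      (hφ.mono (hsub hy hz)).intervalIntegrable
      fun u hu => hφ hy (hsub hy hz (Icc_subset_uIcc hu)) hu.1
  calc (G y - G x) / (y - x) ≤ φ y := by rw [div_le_iff₀ (sub_pos.2 hxy)]; linarith
    _ ≤ (G z - G y) / (z - y) := by rw [le_div_iff₀ (sub_pos.2 hyz)]; linarith

theorem Monotone.intervalIntegrable_sq {f : ℝ → ℝ} (hf : Monotone f) (p q : ℝ) :
    IntervalIntegrable (fun x => f x ^ 2) volume p q := by
  have hbound : ∀ x ∈ Ι p q, ‖f x‖ ≤ max |f (min p q)| |f (max p q)| := fun x hx =>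
    abs_le_max_abs_abs (hf (uIoc_subset_uIcc hx).1) (hf (uIoc_subset_uIcc hx).2)
  rw [intervalIntegrable_iff]
  simpa only [sq, IntegrableOn] using (intervalIntegrable_iff.1 hf.intervalIntegrable).bdd_mul
    hf.measurable.aestronglyMeasurable (ae_restrict_of_forall_mem measurableSet_uIoc hbound)

noncomputable def cauchySchwarzGap (f : ℝ → ℝ) (a t : ℝ) : ℝ :=
  (t - a) * (∫ x in a..t, f x ^ 2) - (∫ x in a..t, f x) ^ 2

noncomputable def sqDeviationIntegral (f : ℝ → ℝ) (a s : ℝ) : ℝ :=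
  ∫ u in a..s, (f u - f s) ^ 2

theorem sqDeviationIntegral_eq {f : ℝ → ℝ} {a s : ℝ} (hf : IntervalIntegrable f volume a s)
    (hf2 : IntervalIntegrable (fun x => f x ^ 2) volume a s) :
    sqDeviationIntegral f a s =
      (∫ u in a..s, f u ^ 2) - 2 * f s * (∫ u in a..s, f u) + (s - a) * f s ^ 2 := by
  have hexpand : (fun u => (f u - f s) ^ 2) = fun u => f u ^ 2 - 2 * f s * f u + f s ^ 2 := by
    funext u; ring
  rw [sqDeviationIntegral, hexpand,
    integral_add (hf2.sub (hf.const_mul _)) intervalIntegrable_const,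
    integral_sub hf2 (hf.const_mul _), intervalIntegral.integral_const_mul,
    intervalIntegral.integral_const, smul_eq_mul]

section Monotone

variable {f : ℝ → ℝ}

theorem Monotone.monotoneOn_sqDeviationIntegral (hf : Monotone f) (a : ℝ) :
    MonotoneOn (sqDeviationIntegral f a) (Ici a) := by
  intro s₁ hs₁ s₂ _ h12
  have hint : ∀ c p q, IntervalIntegrable (fun u => (f u - c) ^ 2) volume p q := fun c =>
    Monotone.intervalIntegrable_sq fun _ _ h => sub_le_sub_right (hf h) c
  -- for `u ≤ s₁ ≤ s₂` we have `0 ≤ f s₁ - f u ≤ f s₂ - f u`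
  have hpointwise : ∫ u in a..s₁, (f u - f s₁) ^ 2 ≤ ∫ u in a..s₁, (f u - f s₂) ^ 2 :=
    integral_mono_on hs₁ (hint _ _ _) (hint _ _ _) fun u hu => by
      nlinarith [hf hu.2, hf h12]
  calc sqDeviationIntegral f a s₁ ≤ ∫ u in a..s₁, (f u - f s₂) ^ 2 := hpointwise
    _ ≤ (∫ u in a..s₁, (f u - f s₂) ^ 2) + ∫ u in s₁..s₂, (f u - f s₂) ^ 2 :=
      le_add_of_nonneg_right (integral_nonneg h12 fun u _ => sq_nonneg _)
    _ = sqDeviationIntegral f a s₂ := integral_add_adjacent_intervals (hint _ _ _) (hint _ _ _)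

theorem Monotone.hasDerivAt_cauchySchwarzGap (hf : Monotone f) (a : ℝ) {t : ℝ}
    (ht : ContinuousAt f t) :
    HasDerivAt (cauchySchwarzGap f a) (sqDeviationIntegral f a t) t := by
  have hsq : HasDerivAt (fun t => ∫ x in a..t, f x ^ 2) (f t ^ 2) t :=
    integral_hasDerivAt_right (hf.intervalIntegrable_sq a t)
      (hf.measurable.pow_const 2).stronglyMeasurable.stronglyMeasurableAtFilter (ht.pow 2)
  have hlin : HasDerivAt (fun t => ∫ x in a..t, f x) (f t) t :=
    integral_hasDerivAt_right hf.intervalIntegrable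
      hf.measurable.stronglyMeasurable.stronglyMeasurableAtFilter ht
  refine ((((hasDerivAt_id t).sub_const a).mul hsq).sub (hlin.pow 2)).congr_deriv ?_
  rw [sqDeviationIntegral_eq hf.intervalIntegrable (hf.intervalIntegrable_sq a t)]
  simp only [id]
  ring

theorem Monotone.cauchySchwarzGap_sub_eq_integral (hf : Monotone f) {a x y : ℝ} (hax : a ≤ x)
    (hxy : x ≤ y) :
    cauchySchwarzGap f a y - cauchySchwarzGap f a x = ∫ s in x..y, sqDeviationIntegral f a s := by
  have hcont : Continuous (cauchySchwarzGap f a) :=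
    ((continuous_id.sub continuous_const).mul
      (continuous_primitive (hf.intervalIntegrable_sq · ·) a)).sub
      ((continuous_primitive (fun _ _ => hf.intervalIntegrable) a).pow 2)
  refine (integral_eq_of_hasDerivAt_off_countable_of_le _ _ hxy hf.countable_not_continuousAt
    hcont.continuousOn (fun t ht => hf.hasDerivAt_cauchySchwarzGap a (not_not.1 ht.2))
    ((hf.monotoneOn_sqDeviationIntegral a).mono ?_).intervalIntegrable).symm
  rw [uIcc_of_le hxy]
  exact Icc_subset_Ici_iff hxy |>.2 hax

theorem Monotone.convexOn_cauchySchwarzGap (hf : Monotone f) (a : ℝ) :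
    ConvexOn ℝ (Ici a) (cauchySchwarzGap f a) :=
  convexOn_of_sub_eq_integral_of_monotoneOn (convex_Ici a) (hf.monotoneOn_sqDeviationIntegral a)
    fun _ hx _ _ hxy => hf.cauchySchwarzGap_sub_eq_integral hx hxy

end Monotone

theorem cauchySchwarzGap_neg (f : ℝ → ℝ) :
    cauchySchwarzGap (fun x => -f x) = cauchySchwarzGap f := by
  funext a t
  simp only [cauchySchwarzGap, neg_sq, intervalIntegral.integral_neg]

theorem convexOn_cauchySchwarzGap {f : ℝ → ℝ} (hf : Monotone f ∨ Antitone f) (a : ℝ) :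
    ConvexOn ℝ (Ici a) (cauchySchwarzGap f a) := by
  rcases hf with hf | hf
  · exact hf.convexOn_cauchySchwarzGap a
  · simpa only [cauchySchwarzGap_neg] using hf.neg.convexOn_cauchySchwarzGap a

theorem exists_monotone_or_antitone_extension_Icc {ψ : ℝ → ℝ} {a b : ℝ}
    (hψ : MonotoneOn ψ (Icc a b) ∨ AntitoneOn ψ (Icc a b)) :
    ∃ g : ℝ → ℝ, (Monotone g ∨ Antitone g) ∧ EqOn ψ g (Icc a b) := by
  rcases hψ with hψ | hψ
  · obtain ⟨g, hg, hψg⟩ := hψ.exists_monotone_extension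
      (bddBelow_Icc.mono hψ.image_Icc_subset) (bddAbove_Icc.mono hψ.image_Icc_subset)
    exact ⟨g, Or.inl hg, hψg⟩
  · obtain ⟨g, hg, hψg⟩ := hψ.exists_antitone_extension
      (bddBelow_Icc.mono hψ.image_Icc_subset) (bddAbove_Icc.mono hψ.image_Icc_subset)
    exact ⟨g, Or.inr hg, hψg⟩

theorem convexOn_mul_integral_sq_sub_sq_integral (a b : ℝ) (ψ : ℝ → ℝ)
    (hψ : MonotoneOn ψ (Icc a b) ∨ AntitoneOn ψ (Icc a b)) :
    ConvexOn ℝ (Icc 0 (b - a))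
      (fun t => t * (∫ τ in a..(a + t), ψ τ ^ 2) - (∫ τ in a..(a + t), ψ τ) ^ 2) := by
  obtain ⟨g, hg, hψg⟩ := exists_monotone_or_antitone_extension_Icc hψ
  have hconv := (convexOn_cauchySchwarzGap hg a).translate_right a
  rw [preimage_const_add_Ici, sub_self] at hconv
  refine (hconv.subset Icc_subset_Ici_self (convex_Icc 0 (b - a))).congr fun t ht => ?_
  have hsub : uIcc a (a + t) ⊆ Icc a b := by
    rw [uIcc_of_le (by linarith [ht.1])]
    exact Icc_subset_Icc_right (by linarith [ht.2])
  simp only [Function.comp, cauchySchwarzGap, add_sub_cancel_left]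
  rw [integral_congr fun x hx => congrArg (· ^ 2) (hψg (hsub hx)).symm,
    integral_congr fun x hx => (hψg (hsub hx)).symm]

theorem statement14_general (a b : ℝ) (ψ : ℝ → ℝ)
    (hmono : MonotoneOn ψ (Set.Icc a b) ∨ AntitoneOn ψ (Set.Icc a b)) :
    ConvexOn ℝ (Set.Icc 0 (b - a))
      (fun t => t * (∫ τ in a..(a + t), ψ τ ^ 2) - (∫ τ in a..(a + t), ψ τ) ^ 2) ∧
    ConvexOn ℝ (Set.Icc 0 (b - a))
      (fun t => t * (∫ τ in (b - t)..b, ψ τ ^ 2) - (∫ τ in (b - t)..b, ψ τ) ^ 2) := by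
  refine ⟨convexOn_mul_integral_sq_sub_sq_integral a b ψ hmono, ?_⟩
  have hneg : MapsTo (fun x : ℝ => -x) (Icc (-b) (-a)) (Icc a b) := fun x hx =>
    ⟨by linarith [hx.2], by linarith [hx.1]⟩
  have hreflect : MonotoneOn (fun x => ψ (-x)) (Icc (-b) (-a)) ∨
      AntitoneOn (fun x => ψ (-x)) (Icc (-b) (-a)) := by
    rcases hmono with hψ | hψ
    · exact Or.inr fun x hx y hy hxy => hψ (hneg hy) (hneg hx) (neg_le_neg hxy)
    · exact Or.inl fun x hx y hy hxy => hψ (hneg hy) (hneg hx) (neg_le_neg hxy)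
  have h := convexOn_mul_integral_sq_sub_sq_integral (-b) (-a) _ hreflect
  rw [neg_sub_neg] at h
  refine h.congr fun t _ => ?_
  simp only [integral_comp_neg (fun τ => ψ τ ^ 2), integral_comp_neg ψ, neg_neg, neg_add_eq_sub,
    neg_sub]

/-- If `ψ` is monotone on `[a,b]` and square integrable, then
`F(t) = t·∫_a^{a+t} ψ² − (∫_a^{a+t} ψ)²` is convex on `[0, b−a]`, and likewise
`t ↦ t·∫_{b−t}^b ψ² − (∫_{b−t}^b ψ)²` is convex on `[0, b−a]`. -/
theorem statement14 (a b : ℝ) (hab : a < b) (ψ : ℝ → ℝ)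
    (hmono : MonotoneOn ψ (Set.Icc a b) ∨ AntitoneOn ψ (Set.Icc a b))
    (hL2 : MemLp ψ 2 (volume.restrict (Set.Icc a b))) :
    ConvexOn ℝ (Set.Icc 0 (b - a))
      (fun t => t * (∫ τ in a..(a + t), ψ τ ^ 2) - (∫ τ in a..(a + t), ψ τ) ^ 2) ∧
    ConvexOn ℝ (Set.Icc 0 (b - a))
      (fun t => t * (∫ τ in (b - t)..b, ψ τ ^ 2) - (∫ τ in (b - t)..b, ψ τ) ^ 2) :=
  statement14_general a b ψ hmono
end
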